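/- Define the symmetrized Dirichlet distortion on the positive orthant of ℝ³ by f^Sym_D(σ₁,σ₂,σ₃) = (1/2)·∑ᵢ₌₁³ σᵢ² + (1/2)·(σ₁σ₂σ₃)·∑ₖ₌₁³ σₖ⁻². Then: (i) for every t > 0, f^Sym_D(t,t,t) = (3/2)·(t² + t); (ii) f^Sym_D(σ) > 0 for every σ in the positive orthant; (iii) the infimum of f^Sym_D over the positive orthant is 0 and is not attained. In particular f^Sym_D(1,1,1) = 3 and (1,1,1) is not a minimizer, so the symmetrized Dirichlet energy does not favor isometry and favors maps that collapse. -/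

import Mathlib

/-- The symmetrized Dirichlet distortion in singular values (3D). -/
noncomputable def fSymD (a b c : ℝ) : ℝ :=
  (1/2) * (a^2 + b^2 + c^2) +
  (1/2) * (a * b * c) * ((a⁻¹)^2 + (b⁻¹)^2 + (c⁻¹)^2)

/-!
Along the diagonal `f^Sym_D(t,t,t) = (3/2)(t² + t)`, which tends to `0` as `t → 0⁺`, while every
value on the positive orthant is positive; so the infimum `0` is approached by uniform shrinking
and never attained, and already `f^Sym_D(1/2,1/2,1/2) = 9/8 < 3 = f^Sym_D(1,1,1)`.
-/

open Filter Topology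

theorem fSymD_diag (t : ℝ) : fSymD t t t = (3/2) * (t^2 + t) := by
  rcases eq_or_ne t 0 with rfl | ht
  · simp [fSymD]
  · unfold fSymD
    field_simp
    ring

theorem fSymD_pos {a b c : ℝ} (ha : 0 < a) (hb : 0 < b) (hc : 0 < c) : 0 < fSymD a b c := by
  unfold fSymD
  positivity

theorem tendsto_fSymD_diag_nhdsGT_zero :
    Tendsto (fun t => fSymD t t t) (𝓝[>] 0) (𝓝 0) := by
  simp only [fSymD_diag]
  have hcont : Continuous fun t : ℝ => (3/2) * (t^2 + t) := by fun_prop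
  simpa using (hcont.tendsto 0).mono_left nhdsWithin_le_nhds

theorem statement_8 :
    (∀ t : ℝ, 0 < t → fSymD t t t = (3/2) * (t^2 + t)) ∧
    (∀ a b c : ℝ, 0 < a → 0 < b → 0 < c → 0 < fSymD a b c) ∧
    IsGLB {x : ℝ | ∃ a b c : ℝ, 0 < a ∧ 0 < b ∧ 0 < c ∧ x = fSymD a b c} 0 ∧
    (0 : ℝ) ∉ {x : ℝ | ∃ a b c : ℝ, 0 < a ∧ 0 < b ∧ 0 < c ∧ x = fSymD a b c} ∧
    fSymD 1 1 1 = 3 ∧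
    (∃ a b c : ℝ, 0 < a ∧ 0 < b ∧ 0 < c ∧ fSymD a b c < fSymD 1 1 1) := by
  set S := {x : ℝ | ∃ a b c : ℝ, 0 < a ∧ 0 < b ∧ 0 < c ∧ x = fSymD a b c}
  have hlower : (0 : ℝ) ∈ lowerBounds S := by
    rintro x ⟨a, b, c, ha, hb, hc, rfl⟩
    exact (fSymD_pos ha hb hc).le
  have hclosure : (0 : ℝ) ∈ closure S :=
    mem_closure_of_tendsto tendsto_fSymD_diag_nhdsGT_zero <|
      eventually_nhdsWithin_of_forall fun t (ht : 0 < t) => ⟨t, t, t, ht, ht, ht, rfl⟩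
  have hone : fSymD 1 1 1 = 3 := by norm_num [fSymD_diag]
  refine ⟨fun t _ => fSymD_diag t, fun a b c => fSymD_pos, isGLB_of_mem_closure hlower hclosure,
    ?_, hone, ⟨1/2, 1/2, 1/2, by norm_num, by norm_num, by norm_num, ?_⟩⟩
  · rintro ⟨a, b, c, ha, hb, hc, h⟩
    exact (fSymD_pos ha hb hc).ne' h.symm
  · norm_num [fSymD_diag, hone]
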